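/- arXiv:2504.20803 — 2 statements merged into one kernel-verified Lean document; each statement's English description precedes it below -/
import Mathlib

section
/- Let E be a real normed space, F̃ : E × ℝ → ℝ a continuously differentiable function, K ⊆ E a compact set, and ε ∈ (0, 1/2). Then there exists C₀ > 0 such that for every C ≥ C₀, the function F : E × ℝ → ℝ defined by F(x,s) = F̃(x,s) + C·h(s) has no critical points in K × [ε, 1-ε]; that is, the Fréchet derivative of F is nonzero at every point (x,s) with x ∈ K and ε ≤ s ≤ 1-ε. -/
/-! It suffices to look at the `s`-direction: there `∂ₛF = ∂ₛF̃ - 3C·s(1 - s)`. On the compact band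
`K × [ε, 1 - ε]` the term `∂ₛF̃` is bounded while `s(1 - s) ≥ ε(1 - ε) > 0`, so `∂ₛF < 0` once `C`
is large. -/

noncomputable def hfun (s : ℝ) : ℝ := s ^ 3 - (3 / 2) * s ^ 2

lemma hasDerivAt_hfun (s : ℝ) : HasDerivAt hfun (3 * s ^ 2 - 3 * s) s := by
  refine (((hasDerivAt_id' s).pow 3).sub
    (((hasDerivAt_id' s).pow 2).const_mul (3 / 2 : ℝ))).congr_deriv ?_
  push_cast
  ring

lemma mul_one_sub_le_mul_one_sub_of_mem_Icc {ε s : ℝ} (hs : s ∈ Set.Icc ε (1 - ε)) :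
    ε * (1 - ε) ≤ s * (1 - s) := by
  nlinarith [mul_nonneg (sub_nonneg.2 hs.1) (sub_nonneg.2 hs.2)]

lemma IsCompact.exists_bound_fderiv_apply {E F : Type*} [NormedAddCommGroup E] [NormedSpace ℝ E]
    [NormedAddCommGroup F] [NormedSpace ℝ F] {f : E → F} (hf : ContDiff ℝ 1 f) {S : Set E}
    (hS : IsCompact S) (v : E) : ∃ M, ∀ p ∈ S, ‖fderiv ℝ f p v‖ ≤ M :=
  hS.exists_bound_of_continuousOn
    ((hf.continuous_fderiv one_ne_zero).clm_apply continuous_const).continuousOn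

lemma fderiv_add_const_mul_comp_snd_apply_zero_one {E : Type*} [NormedAddCommGroup E]
    [NormedSpace ℝ E] {G : E × ℝ → ℝ} {g : ℝ → ℝ} {p : E × ℝ} {g' : ℝ}
    (hG : DifferentiableAt ℝ G p) (hg : HasDerivAt g g' p.2) (C : ℝ) :
    fderiv ℝ (fun q : E × ℝ => G q + C * g q.2) p ((0 : E), (1 : ℝ)) =
      fderiv ℝ G p ((0 : E), (1 : ℝ)) + C * g' := by
  have hgsnd : HasFDerivAt (fun q : E × ℝ => g q.2)
      ((ContinuousLinearMap.smulRight (1 : ℝ →L[ℝ] ℝ) g').comp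
        (ContinuousLinearMap.snd ℝ E ℝ)) p :=
    hg.hasFDerivAt.comp p hasFDerivAt_snd
  have hF : HasFDerivAt (fun q : E × ℝ => G q + C * g q.2) _ p :=
    hG.hasFDerivAt.add (hgsnd.const_mul C)
  rw [hF.fderiv]
  simp

/-- For a `C¹` function `F̃ : E × ℝ → ℝ`, a compact set `K ⊆ E`, and `ε ∈ (0, 1/2)`,
there exists `C₀ > 0` such that for every `C ≥ C₀` the function
`F(x,s) = F̃(x,s) + C·h(s)` has no critical points in `K × [ε, 1-ε]`. -/
theorem no_critical_points_in_band {E : Type*} [NormedAddCommGroup E] [NormedSpace ℝ E]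
    (Ftilde : E × ℝ → ℝ) (hFt : ContDiff ℝ 1 Ftilde)
    (K : Set E) (hK : IsCompact K) (ε : ℝ) (hε : ε ∈ Set.Ioo (0 : ℝ) (1 / 2)) :
    ∃ C₀ > (0 : ℝ), ∀ C : ℝ, C₀ ≤ C → ∀ x ∈ K, ∀ s ∈ Set.Icc ε (1 - ε),
      fderiv ℝ (fun p : E × ℝ => Ftilde p + C * hfun p.2) (x, s) ≠ 0 := by
  obtain ⟨hε0, hε2⟩ := hε
  have hgap : 0 < 3 * (ε * (1 - ε)) := by nlinarith
  obtain ⟨M, hM⟩ := (hK.prod isCompact_Icc).exists_bound_fderiv_apply hFt ((0 : E), (1 : ℝ))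
  refine ⟨(|M| + 1) / (3 * (ε * (1 - ε))), by positivity, fun C hC x hx s hs hcrit => ?_⟩
  have hslope := fderiv_add_const_mul_comp_snd_apply_zero_one
    (hFt.differentiable one_ne_zero (x, s)) (hasDerivAt_hfun s) C
  rw [hcrit] at hslope
  have hFbound : |fderiv ℝ Ftilde (x, s) ((0 : E), (1 : ℝ))| ≤ |M| :=
    (hM (x, s) ⟨hx, hs⟩).trans (le_abs_self M)
  have hC' : |M| + 1 ≤ C * (3 * (ε * (1 - ε))) := (div_le_iff₀ hgap).1 hC
  have hCpos : 0 < C := lt_of_lt_of_le (by positivity) hC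
  have hband := mul_le_mul_of_nonneg_left (mul_one_sub_le_mul_one_sub_of_mem_Icc hs) hCpos.le
  have hFupper := (abs_le.1 hFbound).2
  simp only [zero_apply] at hslope
  nlinarith
end

section
/- Let F : E → ℝ be differentiable with continuous gradient map ∇F : E → E, and let γ : ℝ → E be a gradient flow line of F such that the forward image {γ(t) : t ≥ 0} has compact closure. Then there exist a sequence tₙ → +∞ and a point p ∈ E such that γ(tₙ) → p and ∇F(p) = 0; i.e., the forward orbit accumulates at a critical point of F. -/
open Filter Topology

/-! Along a gradient flow line, `F ∘ γ` has derivative `-‖∇F(γ t)‖²`, so it is nonincreasing,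
and it is bounded below on `[0, ∞)` because `F` is bounded on the compact closure of the
forward orbit. A nonincreasing function that is bounded below cannot keep a derivative
`≤ -ε` on a whole half-line, so there are times `tₙ → ∞` with `∇F(γ(tₙ)) → 0`. By compactness a
subsequence of `γ(tₙ)` converges to some `p`, and continuity of `∇F` gives `∇F(p) = 0`. -/

theorem exists_ge_neg_lt_deriv_of_bddBelow {g g' : ℝ → ℝ} {a ε : ℝ}
    (hg : ∀ t, HasDerivAt g (g' t) t) (hbdd : BddBelow (g '' Set.Ici a)) (hε : 0 < ε) :
    ∃ s, a ≤ s ∧ -ε < g' s := by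
  by_contra! hslope
  obtain ⟨m, hm⟩ := hbdd
  have hdiff : Differentiable ℝ g := fun t => (hg t).differentiableAt
  have hdecrease : ∀ s, a ≤ s → g s - g a ≤ -ε * (s - a) := fun s hs =>
    (convex_Ici a).image_sub_le_mul_sub_of_deriv_le hdiff.continuous.continuousOn
      hdiff.differentiableOn (fun t ht => by
        rw [interior_Ici] at ht
        exact (hg t).deriv ▸ hslope t ht.le) a Set.self_mem_Ici s hs hs
  -- after this time the linear decrease would take `g` below its lower bound `m`
  set s := a + (g a - m + 1) / ε
  have hgap : 0 ≤ (g a - m + 1) / ε :=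
    div_nonneg (by linarith [hm ⟨a, Set.self_mem_Ici, rfl⟩]) hε.le
  have hs : a ≤ s := le_add_of_nonneg_right hgap
  have hlower : m ≤ g s := hm ⟨s, hs, rfl⟩
  have hslope_mul : ε * (s - a) = g a - m + 1 := by
    simp only [s, add_sub_cancel_left]
    field_simp
  linarith [hdecrease s hs]

theorem exists_seq_tendsto_atTop_deriv_tendsto_zero {g g' : ℝ → ℝ} {a : ℝ}
    (hg : ∀ t, HasDerivAt g (g' t) t) (hbdd : BddBelow (g '' Set.Ici a))
    (hnonpos : ∀ t, g' t ≤ 0) :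
    ∃ t : ℕ → ℝ, (∀ n, a ≤ t n) ∧ Tendsto t atTop atTop ∧ Tendsto (g' ∘ t) atTop (𝓝 0) := by
  have hstep (n : ℕ) : ∃ s, max a n ≤ s ∧ -(1 / ((n : ℝ) + 1)) < g' s :=
    exists_ge_neg_lt_deriv_of_bddBelow hg
      (hbdd.mono (Set.image_mono (Set.Ici_subset_Ici.2 (le_max_left a n)))) (by positivity)
  choose t hge hclose using hstep
  refine ⟨t, fun n => (le_max_left _ _).trans (hge n),
    tendsto_atTop_mono (fun n => (le_max_right _ _).trans (hge n)) tendsto_natCast_atTop_atTop,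
    ?_⟩
  have hlower := (tendsto_one_div_add_atTop_nhds_zero_nat (𝕜 := ℝ)).neg
  rw [neg_zero] at hlower
  exact tendsto_of_tendsto_of_tendsto_of_le_of_le hlower tendsto_const_nhds
    (fun n => (hclose n).le) (fun n => hnonpos (t n))

theorem hasDerivAt_comp_gradientFlow {E : Type*} [NormedAddCommGroup E] [InnerProductSpace ℝ E]
    [CompleteSpace E] {F : E → ℝ} {γ : ℝ → E} {t : ℝ} (hF : DifferentiableAt ℝ F (γ t))
    (hγ : HasDerivAt γ (-(gradient F (γ t))) t) :
    HasDerivAt (F ∘ γ) (-‖gradient F (γ t)‖ ^ 2) t := by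
  have h := (hasGradientAt_iff_hasFDerivAt.1 hF.hasGradientAt).comp_hasDerivAt t hγ
  simpa only [InnerProductSpace.toDual_apply_apply, inner_neg_right, real_inner_self_eq_norm_sq]
    using h

/-- If the forward orbit of a gradient flow line `γ` of a differentiable function `F`
with continuous gradient has compact closure, then there is a sequence `tₙ → +∞` with
`γ(tₙ)` converging to a critical point `p` of `F`. -/
theorem forward_orbit_accumulates_at_critical {E : Type*} [NormedAddCommGroup E]
    [InnerProductSpace ℝ E] [CompleteSpace E]
    (F : E → ℝ) (hF : Differentiable ℝ F) (hgrad : Continuous (gradient F)) (γ : ℝ → E)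
    (hγ : ∀ t : ℝ, HasDerivAt γ (-(gradient F (γ t))) t)
    (hcpt : IsCompact (closure (γ '' Set.Ici (0 : ℝ)))) :
    ∃ (t : ℕ → ℝ) (p : E), Tendsto t atTop atTop ∧
      Tendsto (fun n => γ (t n)) atTop (𝓝 p) ∧ gradient F p = 0 := by
  have hbdd : BddBelow ((F ∘ γ) '' Set.Ici 0) := by
    rw [Set.image_comp]
    exact (hcpt.image hF.continuous).bddBelow.mono (Set.image_mono subset_closure)
  obtain ⟨t, ht0, htop, hdecay⟩ := exists_seq_tendsto_atTop_deriv_tendsto_zero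
    (g' := fun s => -‖gradient F (γ s)‖ ^ 2)
    (fun s => hasDerivAt_comp_gradientFlow (hF (γ s)) (hγ s)) hbdd
    (fun s => neg_nonpos.2 (sq_nonneg _))
  have hsmall : Tendsto (fun n => gradient F (γ (t n))) atTop (𝓝 0) := by
    rw [tendsto_zero_iff_norm_tendsto_zero]
    simpa [Function.comp_def, Real.sqrt_sq (norm_nonneg _)] using hdecay.neg.sqrt
  obtain ⟨p, -, φ, hφ, hconv⟩ :=
    hcpt.tendsto_subseq fun n => subset_closure (Set.mem_image_of_mem γ (ht0 n))
  exact ⟨t ∘ φ, p, htop.comp hφ.tendsto_atTop, hconv, tendsto_nhds_unique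
    ((hgrad.tendsto p).comp hconv) (hsmall.comp hφ.tendsto_atTop)⟩
end
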